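/- (Existence of a third class member from a cross.) Let x, y lie in the same equivalence class Γ ⊆ B_A \ {0}, and suppose λ ∈ Λ_x and ν ∈ Λ_y are not crossless. Then there exists z ∈ Γ with z ≠ x and z ≠ y. In particular, if an equivalence class of B_A has exactly two nonzero elements x, y, then every λ ∈ Λ_x and ν ∈ Λ_y are crossless. -/

import Mathlib

open scoped Classical

def eVec (d α : ℕ) (i : Fin d) : Fin d → ℕ := fun j => if j = i then α else 0

def genSet (d α c : ℕ) (a : Fin c → Fin d → ℕ) : Set (Fin d → ℕ) :=
  Set.range (eVec d α) ∪ Set.range a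

def Bmon (d α c : ℕ) (a : Fin c → Fin d → ℕ) : AddSubmonoid (Fin d → ℕ) :=
  AddSubmonoid.closure (genSet d α c a)

def Amon (d α : ℕ) : AddSubmonoid (Fin d → ℕ) :=
  AddSubmonoid.closure (Set.range (eVec d α))

def BAset (d α c : ℕ) (a : Fin c → Fin d → ℕ) : Set (Fin d → ℕ) :=
  {x | x ∈ Bmon d α c a ∧ ∀ y ∈ Amon d α, y ≠ 0 → ∀ z ∈ Bmon d α c a, z + y ≠ x}

def equivA (α : ℕ) {d : ℕ} (x y : Fin d → ℕ) : Prop :=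
  ∀ i, (α : ℤ) ∣ (x i : ℤ) - (y i : ℤ)

def degv (α : ℕ) {d : ℕ} (x : Fin d → ℕ) : ℕ := (∑ i, x i) / α

def pval {d : ℕ} (x : Fin d → ℕ) (L : List (Fin d → ℕ)) (i : ℕ) : Fin d → ℕ :=
  x - (L.take i).sum

def starSeq (d α c : ℕ) (a : Fin c → Fin d → ℕ) (x : Fin d → ℕ)
    (L : List (Fin d → ℕ)) : Prop :=
  (∀ b ∈ L, b ∈ genSet d α c a) ∧
  ∀ i ≤ L.length, ∃ y ∈ Bmon d α c a, y + (L.take i).sum = x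

def Lam (d α c : ℕ) (a : Fin c → Fin d → ℕ) (x : Fin d → ℕ) :
    Set (List (Fin d → ℕ)) :=
  {L | starSeq d α c a x L ∧ L.length = degv α x}

noncomputable def DeltaF (α : ℕ) {d : ℕ} (x y : Fin d → ℕ)
    (L M : List (Fin d → ℕ)) : Finset (ℕ × ℕ) :=
  (Finset.range (L.length + 1) ×ˢ Finset.range (M.length + 1)).filter
    (fun p => equivA α (pval x L p.1) (pval y M p.2))

def hmin {d : ℕ} (x y : Fin d → ℕ) : Fin d → ℕ := fun i => min (x i) (y i)

def crossless (α : ℕ) {d : ℕ} (x y : Fin d → ℕ) (L M : List (Fin d → ℕ)) : Prop :=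
  ∀ p ∈ DeltaF α x y L M, ∀ q ∈ DeltaF α x y L M, p ≤ q ∨ q ≤ p

def isCross (α : ℕ) {d : ℕ} (x y : Fin d → ℕ) (L M : List (Fin d → ℕ))
    (i j l k : ℕ) : Prop :=
  i < j ∧ j ≤ L.length ∧ l < k ∧ k ≤ M.length ∧
  equivA α (pval x L i) (pval y M k) ∧ equivA α (pval x L j) (pval y M l)

noncomputable def deltaMin (d α c : ℕ) (a : Fin c → Fin d → ℕ)
    (x y : Fin d → ℕ) : ℕ :=
  sInf {n | ∃ L ∈ Lam d α c a x, ∃ M ∈ Lam d α c a y,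
    n + 2 = (DeltaF α x y L M).card}

def eqvSetoid (α : ℕ) {d : ℕ} (S : Set (Fin d → ℕ)) : Setoid S where
  r x y := equivA α x.1 y.1
  iseqv := by
    refine ⟨fun x i => ?_, fun {x y} h i => ?_, fun {x y z} h1 h2 i => ?_⟩
    · simp
    · exact dvd_sub_comm.mp (h i)
    · have := dvd_add (h1 i) (h2 i)
      simpa [sub_add_sub_cancel] using this

noncomputable def numClasses (d α c : ℕ) (a : Fin c → Fin d → ℕ) : ℕ :=
  Nat.card (Quotient (eqvSetoid α (BAset d α c a)))

section aux
variable {d α c : ℕ} {a : Fin c → Fin d → ℕ}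

lemma equivA_refl' (x : Fin d → ℕ) : equivA α x x := fun i => by simp

lemma equivA_symm' {x y : Fin d → ℕ} (h : equivA α x y) : equivA α y x :=
  fun i => dvd_sub_comm.mp (h i)

lemma equivA_trans' {x y z : Fin d → ℕ} (h1 : equivA α x y) (h2 : equivA α y z) :
    equivA α x z := fun i => by
  have := dvd_add (h1 i) (h2 i); simpa [sub_add_sub_cancel] using this

lemma gen_sum (ha : ∀ i, ∑ j, a i j = α) {g : Fin d → ℕ} (hg : g ∈ genSet d α c a) :
    ∑ j, g j = α := by
  rcases hg with ⟨i, rfl⟩ | ⟨i, rfl⟩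
  · simp [eVec]
  · exact ha i

lemma amon_dvd {w : Fin d → ℕ} (hw : w ∈ Amon d α) (j : Fin d) : α ∣ w j := by
  induction hw using AddSubmonoid.closure_induction with
  | mem g hg => rcases hg with ⟨i, rfl⟩; by_cases h : j = i <;> simp [eVec, h]
  | zero => simp
  | add u v _ _ hu hv => exact dvd_add hu hv

lemma dvd_mem_Amon {w : Fin d → ℕ} (hw : ∀ j, α ∣ w j) : w ∈ Amon d α := by
  have hrep : w = ∑ i : Fin d, (w i / α) • eVec d α i := by
    funext j
    simp only [Finset.sum_apply, Pi.smul_apply, eVec, smul_eq_mul]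
    rw [Finset.sum_eq_single j (fun i _ hij => by simp [Ne.symm hij]) (by simp)]
    simp [Nat.div_mul_cancel (hw j)]
  rw [hrep]
  exact AddSubmonoid.sum_mem _ fun i _ =>
    AddSubmonoid.nsmul_mem _ (AddSubmonoid.subset_closure (Set.mem_range_self i)) _

lemma amon_le_bmon : Amon d α ≤ Bmon d α c a :=
  AddSubmonoid.closure_mono Set.subset_union_left

lemma pval_spec {x : Fin d → ℕ} {L : List (Fin d → ℕ)} (hL : starSeq d α c a x L)
    {m : ℕ} (hm : m ≤ L.length) :
    pval x L m ∈ Bmon d α c a ∧ pval x L m + (L.take m).sum = x := by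
  obtain ⟨b, hbB, hb⟩ := hL.2 m hm
  have hpb : pval x L m = b := by
    funext j
    have := congrFun hb j
    simp only [pval, Pi.sub_apply, Pi.add_apply] at this ⊢
    omega
  rw [hpb]; exact ⟨hbB, hb⟩

lemma listsum_mem_B {T : List (Fin d → ℕ)} (hT : ∀ g ∈ T, g ∈ genSet d α c a) :
    T.sum ∈ Bmon d α c a :=
  AddSubmonoid.list_sum_mem _ fun g hg => AddSubmonoid.subset_closure (hT g hg)

lemma sum_coords_list (ha : ∀ i, ∑ j, a i j = α) (T : List (Fin d → ℕ))
    (hT : ∀ g ∈ T, g ∈ genSet d α c a) : ∑ j, T.sum j = T.length * α := by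
  induction T with
  | nil => simp
  | cons g T ih =>
    have hg := gen_sum ha (hT g List.mem_cons_self)
    have := ih (fun g' hg' => hT g' (List.mem_cons_of_mem g hg'))
    simp only [List.sum_cons, Pi.add_apply, List.length_cons, Finset.sum_add_distrib]
    rw [hg, this]; ring

lemma take_sum_coords (ha : ∀ i, ∑ j, a i j = α) {T : List (Fin d → ℕ)}
    (hT : ∀ g ∈ T, g ∈ genSet d α c a) {m : ℕ} (hm : m ≤ T.length) :
    ∑ j, (T.take m).sum j = m * α := by
  rw [sum_coords_list ha _ (fun g hg => hT g ((List.take_sublist m T).subset hg))]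
  rw [List.length_take]; congr 1; omega

lemma exists_lt_of_sum_lt' {u v : Fin d → ℕ} (h : ∑ r, u r < ∑ r, v r) :
    ∃ r, u r < v r := by
  by_contra hc; push_neg at hc
  exact absurd (Finset.sum_le_sum fun r _ => hc r) (not_le.mpr h)

end aux
section aux2
variable {d α c : ℕ} {a : Fin c → Fin d → ℕ}

lemma eq_of_equiv_le {x P Q s : Fin d → ℕ} (hx : x ∈ BAset d α c a)
    (hPs : P + s = x) (hQB : Q ∈ Bmon d α c a) (hsB : s ∈ Bmon d α c a)
    (he : equivA α P Q) (hle : ∀ j, Q j ≤ P j) : P = Q := by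
  by_contra hne
  have hwd : ∀ j, α ∣ P j - Q j := fun j => by
    have h1 := he j
    have h2 : ((P j - Q j : ℕ) : ℤ) = (P j : ℤ) - Q j := by
      have := hle j; omega
    rw [← h2] at h1
    exact_mod_cast h1
  have hw0 : (fun j => P j - Q j) ≠ (0 : Fin d → ℕ) := by
    intro h0
    apply hne; funext j
    have h1 := congrFun h0 j
    have h2 := hle j
    simp only [Pi.zero_apply] at h1
    omega
  have hsum : (Q + s) + (fun j => P j - Q j) = x := by
    funext j
    have h1 := congrFun hPs j
    have h2 := hle j
    simp only [Pi.add_apply] at h1 ⊢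
    omega
  exact hx.2 _ (dvd_mem_Amon hwd) hw0 (Q + s) (add_mem hQB hsB) hsum

lemma not_all_dvd (hα : 0 < α) {x : Fin d → ℕ} (hx : x ∈ BAset d α c a)
    (hx0 : x ≠ 0) : ¬ ∀ j, α ∣ x j := by
  intro hall
  obtain ⟨r, hr⟩ : ∃ r, x r ≠ 0 := by
    by_contra h; push_neg at h; exact hx0 (funext h)
  have hxr : α ≤ x r := Nat.le_of_dvd (Nat.pos_of_ne_zero hr) (hall r)
  set b : Fin d → ℕ := fun j => x j - eVec d α r j with hb
  have hbA : b ∈ Amon d α := dvd_mem_Amon fun j => by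
    rcases eq_or_ne j r with h | h
    · simpa [hb, eVec, h] using Nat.dvd_sub (hall r) dvd_rfl
    · simpa [hb, eVec, h] using hall j
  have heA : eVec d α r ∈ Amon d α := AddSubmonoid.subset_closure (Set.mem_range_self r)
  have he0 : eVec d α r ≠ 0 := fun h => by
    have := congrFun h r; simp [eVec] at this; omega
  have hsum : b + eVec d α r = x := by
    funext j
    rcases eq_or_ne j r with h | h <;> simp [hb, eVec, h, Pi.add_apply] <;> omega
  exact hx.2 (eVec d α r) heA he0 b (amon_le_bmon hbA) hsum

lemma exists_BA_le : ∀ (n : ℕ) (b : Fin d → ℕ), (∑ j, b j = n) → b ∈ Bmon d α c a →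
    ∃ z ∈ BAset d α c a, (∀ j, z j ≤ b j) ∧ equivA α z b := by
  intro n
  induction n using Nat.strong_induction_on with
  | _ n ih =>
    intro b hn hb
    by_cases hba : b ∈ BAset d α c a
    · exact ⟨b, hba, fun j => le_rfl, equivA_refl' b⟩
    · have hne : ¬ ∀ y ∈ Amon d α, y ≠ 0 → ∀ z ∈ Bmon d α c a, z + y ≠ b :=
        fun h => hba ⟨hb, h⟩
      push_neg at hne
      obtain ⟨w, hwA, hw0, b', hb'B, hb'⟩ := hne
      have hbw : ∀ j, b' j + w j = b j := fun j => by
        have := congrFun hb' j; simpa [Pi.add_apply] using this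
      obtain ⟨j0, hj0⟩ := Function.ne_iff.mp hw0
      have hwpos : 0 < ∑ j, w j :=
        Finset.sum_pos' (fun i _ => Nat.zero_le _)
          ⟨j0, Finset.mem_univ j0, Nat.pos_of_ne_zero (by simpa using hj0)⟩
      have hsum : ∑ j, b' j + ∑ j, w j = n := by
        rw [← hn, ← Finset.sum_add_distrib]
        exact Finset.sum_congr rfl fun j _ => hbw j
      have hlt : ∑ j, b' j < n := by omega
      obtain ⟨z, hz, hle, he⟩ := ih _ hlt b' rfl hb'B
      refine ⟨z, hz, fun j => le_trans (hle j) (by have := hbw j; omega), ?_⟩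
      refine equivA_trans' he fun j => ?_
      have h1 := hbw j
      have hd := amon_dvd hwA j
      have h2 : (b' j : ℤ) - b j = -(w j : ℤ) := by omega
      rw [h2]
      exact dvd_neg.mpr (Int.natCast_dvd_natCast.mpr hd)

lemma finish_lemma (hα : 0 < α) {x y C : Fin d → ℕ}
    (hx : x ∈ BAset d α c a) (hx0 : x ≠ 0)
    (hCB : C ∈ Bmon d α c a) (hCx : equivA α C x)
    (h1 : ∃ r, C r < x r) (h2 : ∃ r, C r < y r) :
    ∃ z ∈ BAset d α c a, z ≠ 0 ∧ equivA α z x ∧ z ≠ x ∧ z ≠ y := by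
  obtain ⟨z, hzBA, hzle, hze⟩ := exists_BA_le (∑ j, C j) C rfl hCB
  have hzx : equivA α z x := equivA_trans' hze hCx
  refine ⟨z, hzBA, ?_, hzx, ?_, ?_⟩
  · rintro rfl
    refine not_all_dvd hα hx hx0 fun j => ?_
    have h := hzx j
    simp only [Pi.zero_apply, Nat.cast_zero, zero_sub] at h
    exact_mod_cast dvd_neg.mp h
  · obtain ⟨r, hr⟩ := h1
    intro he
    have := hzle r
    rw [he] at this
    omega
  · obtain ⟨r, hr⟩ := h2
    intro he
    have := hzle r
    rw [he] at this
    omega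

end aux2
section aux3
variable {d α c : ℕ} {a : Fin c → Fin d → ℕ}

lemma cross_core (hα : 0 < α) (ha : ∀ i, ∑ j, a i j = α) {x y : Fin d → ℕ}
    (hx : x ∈ BAset d α c a) (hx0 : x ≠ 0) (hy : y ∈ BAset d α c a)
    (hxy : equivA α x y)
    {L M : List (Fin d → ℕ)} (hL : starSeq d α c a x L) (hM : starSeq d α c a y M)
    {i j l k : ℕ} (hij : i < j) (hjL : j ≤ L.length) (hlk : l < k) (hkM : k ≤ M.length)
    (hik : equivA α (pval x L i) (pval y M k))
    (hjl : equivA α (pval x L j) (pval y M l)) :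
    ∃ z ∈ BAset d α c a, z ≠ 0 ∧ equivA α z x ∧ z ≠ x ∧ z ≠ y := by
  have hiL : i ≤ L.length := le_trans (le_of_lt hij) hjL
  have hlM : l ≤ M.length := le_trans (le_of_lt hlk) hkM
  obtain ⟨hPiB, hPi⟩ := pval_spec hL hiL
  obtain ⟨hPjB, hPj⟩ := pval_spec hL hjL
  obtain ⟨hQlB, hQl⟩ := pval_spec hM hlM
  obtain ⟨hQkB, hQk⟩ := pval_spec hM hkM
  set PI := pval x L i with hPIdef
  set PJ := pval x L j with hPJdef
  set QL := pval y M l with hQLdef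
  set QK := pval y M k with hQKdef
  set si := (L.take i).sum with hsidef
  set sj := (L.take j).sum with hsjdef
  set tl := (M.take l).sum with htldef
  set tk := (M.take k).sum with htkdef
  have hsiB : si ∈ Bmon d α c a :=
    listsum_mem_B fun g hg => hL.1 g ((List.take_sublist i L).subset hg)
  have hsjB : sj ∈ Bmon d α c a :=
    listsum_mem_B fun g hg => hL.1 g ((List.take_sublist j L).subset hg)
  have htlB : tl ∈ Bmon d α c a :=
    listsum_mem_B fun g hg => hM.1 g ((List.take_sublist l M).subset hg)
  have htkB : tk ∈ Bmon d α c a :=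
    listsum_mem_B fun g hg => hM.1 g ((List.take_sublist k M).subset hg)
  have hsi_sum : ∑ r, si r = i * α := take_sum_coords ha hL.1 hiL
  have hsj_sum : ∑ r, sj r = j * α := take_sum_coords ha hL.1 hjL
  have htl_sum : ∑ r, tl r = l * α := take_sum_coords ha hM.1 hlM
  have htk_sum : ∑ r, tk r = k * α := take_sum_coords ha hM.1 hkM
  -- pointwise prefix inequalities
  have hsij : ∀ r, si r ≤ sj r := fun r => by
    have hj' : i + (j - i) = j := by omega
    rw [hsidef, hsjdef, ← hj', List.take_add, List.sum_append, Pi.add_apply]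
    exact Nat.le_add_right _ _
  have htlk : ∀ r, tl r ≤ tk r := fun r => by
    have hk' : l + (k - l) = k := by omega
    rw [htldef, htkdef, ← hk', List.take_add, List.sum_append, Pi.add_apply]
    exact Nat.le_add_right _ _
  -- pointwise pval inequalities
  have hPxi : ∀ r, PI r + si r = x r := fun r => by
    have := congrFun hPi r; simpa [Pi.add_apply] using this
  have hPxj : ∀ r, PJ r + sj r = x r := fun r => by
    have := congrFun hPj r; simpa [Pi.add_apply] using this
  have hQyl : ∀ r, QL r + tl r = y r := fun r => by
    have := congrFun hQl r; simpa [Pi.add_apply] using this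
  have hQyk : ∀ r, QK r + tk r = y r := fun r => by
    have := congrFun hQk r; simpa [Pi.add_apply] using this
  have hPji : ∀ r, PJ r ≤ PI r := fun r => by
    have h1 := hPxi r; have h2 := hPxj r; have h3 := hsij r; omega
  have hQkl : ∀ r, QK r ≤ QL r := fun r => by
    have h1 := hQyl r; have h2 := hQyk r; have h3 := htlk r; omega
  -- coordinate-sum identities
  have hsumx : ∑ r, PI r + i * α = ∑ r, x r := by
    rw [← hsi_sum, ← Finset.sum_add_distrib]
    exact Finset.sum_congr rfl fun r _ => hPxi r
  have hsumxj : ∑ r, PJ r + j * α = ∑ r, x r := by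
    rw [← hsj_sum, ← Finset.sum_add_distrib]
    exact Finset.sum_congr rfl fun r _ => hPxj r
  have hsumyl : ∑ r, QL r + l * α = ∑ r, y r := by
    rw [← htl_sum, ← Finset.sum_add_distrib]
    exact Finset.sum_congr rfl fun r _ => hQyl r
  have hsumyk : ∑ r, QK r + k * α = ∑ r, y r := by
    rw [← htk_sum, ← Finset.sum_add_distrib]
    exact Finset.sum_congr rfl fun r _ => hQyk r
  have hstrictP : ∃ r, PJ r < PI r :=
    exists_lt_of_sum_lt' (by nlinarith [hα, hij])
  have hstrictQ : ∃ r, QK r < QL r :=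
    exists_lt_of_sum_lt' (by nlinarith [hα, hlk])
  -- the two pvals in each congruent pair are distinct
  have hPQik : PI ≠ QK := by
    intro heq
    have hle : ∀ r, PJ r ≤ QL r := fun r =>
      le_trans (hPji r) (le_trans (le_of_eq (congrFun heq r)) (hQkl r))
    have hEq := eq_of_equiv_le hy hQl hPjB htlB (equivA_symm' hjl) hle
    obtain ⟨r, hr⟩ := hstrictP
    have h1 := congrFun hEq r
    have h2 := congrFun heq r
    have h3 := hQkl r
    omega
  have hPQjl : PJ ≠ QL := by
    intro heq
    have hle : ∀ r, QK r ≤ PI r := fun r =>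
      le_trans (hQkl r) (le_trans (le_of_eq (congrFun heq r).symm) (hPji r))
    have hEq := eq_of_equiv_le hx hPi hQkB hsiB hik hle
    obtain ⟨r, hr⟩ := hstrictQ
    have h1 := congrFun hEq r
    have h2 := congrFun heq r
    have h3 := hPji r
    omega
  -- incomparabilities
  have inc_ik1 : ∃ r, PI r < QK r := by
    by_contra h; push_neg at h
    exact hPQik (eq_of_equiv_le hx hPi hQkB hsiB hik h)
  have inc_ik2 : ∃ r, QK r < PI r := by
    by_contra h; push_neg at h
    exact hPQik (eq_of_equiv_le hy hQk hPiB htkB (equivA_symm' hik) h).symm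
  have inc_jl1 : ∃ r, PJ r < QL r := by
    by_contra h; push_neg at h
    exact hPQjl (eq_of_equiv_le hx hPj hQlB hsjB hjl h)
  have inc_jl2 : ∃ r, QL r < PJ r := by
    by_contra h; push_neg at h
    exact hPQjl (eq_of_equiv_le hy hQl hPjB htlB (equivA_symm' hjl) h).symm
  rcases lt_trichotomy i k with hik' | hik' | hik'
  · -- i < k : use C = QK + si
    obtain ⟨r2, hr2⟩ := inc_ik2
    obtain ⟨r1, hr1⟩ : ∃ r, si r < tk r := by
      refine exists_lt_of_sum_lt' ?_
      rw [hsi_sum, htk_sum]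
      exact (Nat.mul_lt_mul_right hα).mpr hik'
    refine finish_lemma hα hx hx0 (add_mem hQkB hsiB) ?_ ⟨r2, ?_⟩ ⟨r1, ?_⟩
    · intro r
      have h1 := hPxi r
      have h2 := (equivA_symm' hik) r
      simp only [Pi.add_apply]
      have he : ((QK r : ℤ) + si r) - (x r : ℤ) = (QK r : ℤ) - PI r := by omega
      push_cast
      rw [he]; exact h2
    · have := hPxi r2; simp only [Pi.add_apply]; omega
    · have := hQyk r1; simp only [Pi.add_apply]; omega
  · -- i = k : then l < j, use C = PJ + tl
    have hlj : l < j := by omega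
    obtain ⟨r2, hr2⟩ := inc_jl1
    obtain ⟨r1, hr1⟩ : ∃ r, tl r < sj r := by
      refine exists_lt_of_sum_lt' ?_
      rw [htl_sum, hsj_sum]
      exact (Nat.mul_lt_mul_right hα).mpr hlj
    refine finish_lemma hα hx hx0 (add_mem hPjB htlB) ?_ ⟨r1, ?_⟩ ⟨r2, ?_⟩
    · refine equivA_trans' ?_ (equivA_symm' hxy)
      intro r
      have h1 := hQyl r
      have h2 := hjl r
      simp only [Pi.add_apply]
      have he : ((PJ r : ℤ) + tl r) - (y r : ℤ) = (PJ r : ℤ) - QL r := by omega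
      push_cast
      rw [he]; exact h2
    · have := hPxj r1; simp only [Pi.add_apply]; omega
    · have := hQyl r2; simp only [Pi.add_apply]; omega
  · -- k < i : use C = PI + tk
    obtain ⟨r2, hr2⟩ := inc_ik1
    obtain ⟨r1, hr1⟩ : ∃ r, tk r < si r := by
      refine exists_lt_of_sum_lt' ?_
      rw [htk_sum, hsi_sum]
      exact (Nat.mul_lt_mul_right hα).mpr hik'
    refine finish_lemma hα hx hx0 (add_mem hPiB htkB) ?_ ⟨r1, ?_⟩ ⟨r2, ?_⟩
    · refine equivA_trans' ?_ (equivA_symm' hxy)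
      intro r
      have h1 := hQyk r
      have h2 := hik r
      simp only [Pi.add_apply]
      have he : ((PI r : ℤ) + tk r) - (y r : ℤ) = (PI r : ℤ) - QK r := by omega
      push_cast
      rw [he]; exact h2
    · have := hPxi r1; simp only [Pi.add_apply]; omega
    · have := hQyk r2; simp only [Pi.add_apply]; omega

end aux3

/-- if `x, y` lie in the same equivalence class `Γ ⊆ B_A \ {0}` and
`λ ∈ Λ_x`, `ν ∈ Λ_y` are not crossless, then `Γ` contains a third element `z`.
In particular, if the class of `x` in `B_A \ {0}` is exactly `{x, y}`, then every
`λ ∈ Λ_x` and `ν ∈ Λ_y` are crossless. -/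
theorem cross_gives_third_class_member (d α c : ℕ) (hd : 0 < d) (hα : 0 < α) (hc : 0 < c)
    (a : Fin c → Fin d → ℕ) (ha : ∀ i, ∑ j, a i j = α)
    (x y : Fin d → ℕ) (hx : x ∈ BAset d α c a) (hx0 : x ≠ 0)
    (hy : y ∈ BAset d α c a) (hy0 : y ≠ 0) (hxy : equivA α x y) (hne : x ≠ y)
    (L : List (Fin d → ℕ)) (hL : L ∈ Lam d α c a x)
    (M : List (Fin d → ℕ)) (hM : M ∈ Lam d α c a y) :
    (¬ crossless α x y L M →
      ∃ z ∈ BAset d α c a, z ≠ 0 ∧ equivA α z x ∧ z ≠ x ∧ z ≠ y) ∧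
    ((∀ z ∈ BAset d α c a, z ≠ 0 → equivA α z x → z = x ∨ z = y) →
      crossless α x y L M) := by
  have hmain : ¬ crossless α x y L M →
      ∃ z ∈ BAset d α c a, z ≠ 0 ∧ equivA α z x ∧ z ≠ x ∧ z ≠ y := by
    intro hnc
    rw [crossless] at hnc
    push_neg at hnc
    obtain ⟨p, hp, q, hq, hpq, hqp⟩ := hnc
    simp only [DeltaF, Finset.mem_filter, Finset.mem_product, Finset.mem_range] at hp hq
    obtain ⟨⟨hp1, hp2⟩, hpe⟩ := hp
    obtain ⟨⟨hq1, hq2⟩, hqe⟩ := hq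
    rw [Prod.le_def, not_and_or] at hpq hqp
    simp only [not_le] at hpq hqp
    have hL' : starSeq d α c a x L := hL.1
    have hM' : starSeq d α c a y M := hM.1
    have hcases : (p.1 < q.1 ∧ q.2 < p.2) ∨ (q.1 < p.1 ∧ p.2 < q.2) := by omega
    rcases hcases with ⟨h1, h2⟩ | ⟨h1, h2⟩
    · exact cross_core hα ha hx hx0 hy hxy hL' hM' h1 (by omega) h2 (by omega) hpe hqe
    · exact cross_core hα ha hx hx0 hy hxy hL' hM' h1 (by omega) h2 (by omega) hqe hpe
  refine ⟨hmain, ?_⟩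
  intro h2
  by_contra hnc
  obtain ⟨z, hzBA, hz0, hzx, hzx', hzy⟩ := hmain hnc
  rcases h2 z hzBA hz0 hzx with rfl | rfl
  · exact hzx' rfl
  · exact hzy rfl
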